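/- Let k be an algebraic closure of F_3, let G be a subgroup of PGL_2(k), and let N be a normal subgroup of G such that the quotient G/N is abelian. If N is conjugate in PGL_2(k) to PSL_2(F_3), then G is conjugate in PGL_2(k) to PSL_2(F_3) or to PGL_2(F_3). -/

import Mathlib

open Matrix

noncomputable section

/-- `PGL₂` of a field (or commutative ring): the quotient of `GL₂` by its center. -/
abbrev PGL2 (K : Type*) [CommRing K] : Type _ :=
  GL (Fin 2) K ⧸ Subgroup.center (GL (Fin 2) K)

/-- The natural projection `GL₂(K) → PGL₂(K)`. -/
def toPGL2 (K : Type*) [CommRing K] : GL (Fin 2) K →* PGL2 K :=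
  QuotientGroup.mk' _

/-- The image of `PGL₂(R)` in `PGL₂(k)` induced by a ring homomorphism `f : R →+* k`
(e.g. the inclusion of a finite field into an algebraic closure). -/
def PGLsub {R k : Type*} [CommRing R] [CommRing k] (f : R →+* k) : Subgroup (PGL2 k) :=
  ((toPGL2 k).comp (Matrix.GeneralLinearGroup.map f)).range

/-- The image of `PSL₂(R)` (i.e. the image of `SL₂(R)`) in `PGL₂(k)` induced by a ring
homomorphism `f : R →+* k`. -/
def PSLsub {R k : Type*} [CommRing R] [CommRing k] (f : R →+* k) : Subgroup (PGL2 k) :=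
  ((toPGL2 k).comp ((Matrix.GeneralLinearGroup.map f).comp
    Matrix.SpecialLinearGroup.toGL)).range

/-- Two subgroups of a group are conjugate. -/
def IsConjSubgroup {G : Type*} [Group G] (H K : Subgroup G) : Prop :=
  ∃ g : G, Subgroup.map (MulAut.conj g).toMonoidHom H = K

/-!
After conjugating, `N` becomes `A = PSL₂(𝔽₃) ≅ A₄` and `G` lies in the normalizer of `A`.
Conjugation by an element `x` of that normalizer permutes the three involutions `i`, `j`, `ij`
of `A` (the image of the quaternion group of `SL₂(𝔽₃)`), and `PGL₂(𝔽₃) ≅ S₄` realizes every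
such permutation, so modulo `PGL₂(𝔽₃)` the element `x` centralizes `i` and `j`. In
characteristic `3` a direct computation shows that this centralizer in `PGL₂(k)` is `{1, i, j, ij}`.
Hence the normalizer of `A` is `PGL₂(𝔽₃)`, in which `A` has index `2` (the determinant modulo
squares), so `G` is `A` or `PGL₂(𝔽₃)`.
-/

theorem map_conj_le_normalizer_of_normal {G : Type*} [Group G] {H : Subgroup G} {N : Subgroup H}
    [N.Normal] (g : G) :
    H.map (MulAut.conj g).toMonoidHom ≤
      Subgroup.normalizer ((N.map H.subtype).map (MulAut.conj g).toMonoidHom : Set G) := by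
  rw [← Subgroup.map_equiv_normalizer_eq]
  refine Subgroup.map_mono ?_
  have := Subgroup.le_normalizer_map H.subtype (H := N)
  rwa [Subgroup.normalizer_eq_top, ← MonoidHom.range_eq_map, Subgroup.range_subtype] at this

section PGL2

variable {F K : Type*} [Field F] [Field K]

theorem toPGL2_eq_toPGL2_iff {y z : GL (Fin 2) K} :
    toPGL2 K y = toPGL2 K z ↔ ∃ c : K, y.val = c • z.val := by
  change ProjGenLinGroup.mk y = ProjGenLinGroup.mk z ↔ _
  simp only [ProjGenLinGroup.mk_eq_mk_iff, Units.ext_iff, Units.val_mul,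
    GeneralLinearGroup.coe_scalar, scalar_apply, ← smul_one_eq_diagonal]
  constructor
  · rintro ⟨u, hu⟩
    exact ⟨(u⁻¹ : Kˣ), by simp [← hu, smul_smul]⟩
  · rintro ⟨c, hc⟩
    have hc0 : c ≠ 0 := by
      rintro rfl
      simpa [hc] using y.isUnit
    exact ⟨(Units.mk0 c hc0)⁻¹, by simp [hc, smul_smul, hc0]⟩

variable (f : F →+* K)

def glToPGL2 : GL (Fin 2) F →* PGL2 K :=
  (toPGL2 K).comp (GeneralLinearGroup.map f)

theorem mem_PGLsub_iff {x : PGL2 K} : x ∈ PGLsub f ↔ ∃ u, glToPGL2 f u = x := Iff.rfl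

theorem PSLsub_le_PGLsub : PSLsub f ≤ PGLsub f := by
  rintro _ ⟨M, rfl⟩
  exact ⟨M, rfl⟩

theorem exists_eq_smul_one_of_glToPGL2_eq_one {w : GL (Fin 2) F} (h : glToPGL2 f w = 1) :
    ∃ c : F, w.val = c • 1 := by
  rw [← map_one (toPGL2 K), glToPGL2, MonoidHom.comp_apply, toPGL2_eq_toPGL2_iff] at h
  obtain ⟨c, hc⟩ := h
  have hf : ∀ i j, f (w.val i j) = f ((w.val 0 0 • 1 : Matrix (Fin 2) (Fin 2) F) i j) := by
    intro i j
    have hij := congrFun (congrFun hc i) j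
    have h00 := congrFun (congrFun hc 0) 0
    fin_cases i <;> fin_cases j <;> simp_all
  exact ⟨w.val 0 0, Matrix.ext fun i j ↦ f.injective (hf i j)⟩

theorem glToPGL2_eq_glToPGL2_iff {u v : GL (Fin 2) F} :
    glToPGL2 f u = glToPGL2 f v ↔ ∃ c : F, u.val = c • v.val := by
  constructor
  · intro h
    rw [← mul_inv_eq_one, ← map_inv, ← map_mul] at h
    obtain ⟨c, hc⟩ := exists_eq_smul_one_of_glToPGL2_eq_one f h
    refine ⟨c, ?_⟩
    rw [show u = u * v⁻¹ * v by group, Units.val_mul, hc, smul_mul, one_mul]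
  · rintro ⟨c, hc⟩
    refine toPGL2_eq_toPGL2_iff.mpr ⟨f c, ?_⟩
    ext i j
    simp [hc]

theorem glToPGL2_conj_eq {P T T' : GL (Fin 2) F}
    (h : ∃ c : F, P.val * T.val = c • (T'.val * P.val)) :
    MulAut.conj (glToPGL2 f P) (glToPGL2 f T) = glToPGL2 f T' := by
  rw [MulAut.conj_apply, mul_inv_eq_iff_eq_mul, ← map_mul, ← map_mul,
    glToPGL2_eq_glToPGL2_iff]
  exact h

end PGL2

section Matrix2

variable {K : Type*} [Field K]

theorem eq_one_or_eq_neg_one_of_mul_eq_smul_mul {Y M : Matrix (Fin 2) (Fin 2) K} {e : K}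
    (hY : Y.det ≠ 0) (hM : M.det = 1) (h : Y * M = e • (M * Y)) : e = 1 ∨ e = -1 := by
  have hdet := congrArg det h
  rw [det_mul, det_smul, det_mul, hM, Fintype.card_fin] at hdet
  have he : e ^ 2 = 1 := mul_right_cancel₀ hY (by linear_combination -hdet)
  exact sq_eq_one_iff.mp he

theorem exists_eq_smul_of_mul_quat_eq_smul (h3 : (3 : K) = 0) {Y : Matrix (Fin 2) (Fin 2) K}
    (hY : Y.det ≠ 0) {ε δ : K} (hε : Y * !![0, 1; -1, 0] = ε • (!![0, 1; -1, 0] * Y))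
    (hδ : Y * !![1, 1; 1, -1] = δ • (!![1, 1; 1, -1] * Y)) :
    ∃ c : K, Y = c • 1 ∨ Y = c • !![0, 1; -1, 0] ∨ Y = c • !![1, 1; 1, -1] ∨
      Y = c • !![1, -1; -1, -1] := by
  have hε' := eq_one_or_eq_neg_one_of_mul_eq_smul_mul hY (by simp [det_fin_two_of]) hε
  have hδ' := eq_one_or_eq_neg_one_of_mul_eq_smul_mul hY
    (by rw [det_fin_two_of]; linear_combination -h3) hδ
  obtain ⟨a, b, c, d, rfl⟩ : ∃ a b c d, Y = !![a, b; c, d] := ⟨_, _, _, _, eta_fin_two Y⟩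
  rw [mul_fin_two, mul_fin_two] at hε hδ
  have eI00 := congrFun (congrFun hε 0) 0
  have eI01 := congrFun (congrFun hε 0) 1
  have eJ00 := congrFun (congrFun hδ 0) 0
  have eJ01 := congrFun (congrFun hδ 0) 1
  simp only [of_apply, cons_val', cons_val_zero, cons_val_one, cons_val_fin_one,
    Matrix.smul_apply, smul_eq_mul, mul_zero, mul_one, mul_neg, zero_mul, one_mul, neg_mul,
    zero_add, add_zero]
    at eI00 eI01 eJ00 eJ01
  rcases hε' with rfl | rfl <;> rcases hδ' with rfl | rfl
  · have hb : b = 0 := by linear_combination b * h3 - eJ00 + eI00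
    have hc : c = 0 := by linear_combination -eI00 - hb
    have hd : d = a := by linear_combination -eI01
    refine ⟨a, Or.inl ?_⟩
    subst hb hc hd
    ext i j; fin_cases i <;> fin_cases j <;> simp
  · have ha : a = 0 := by linear_combination a * h3 - eJ00 - eI00
    have hd : d = 0 := by linear_combination ha - eI01
    have hc : c = -b := by linear_combination -eI00
    refine ⟨b, Or.inr (Or.inl ?_)⟩
    subst ha hd hc
    ext i j; fin_cases i <;> fin_cases j <;> simp
  · have hc : c = b := by linear_combination eI00
    have hd : d = -a := by linear_combination eI01
    have hb : b = a := by linear_combination (b - a) * h3 + eJ01 + eI01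
    refine ⟨a, Or.inr (Or.inr (Or.inl ?_))⟩
    subst hc hd hb
    ext i j; fin_cases i <;> fin_cases j <;> simp
  · have hc : c = b := by linear_combination eI00
    have hd : d = -a := by linear_combination eI01
    have hb : b = -a := by linear_combination (a + b) * h3 - eJ00 - eI00 + 2 * hc
    refine ⟨a, Or.inr (Or.inr (Or.inr ?_))⟩
    subst hc hd hb
    ext i j; fin_cases i <;> fin_cases j <;> simp

end Matrix2

section ZMod3

variable {K : Type*} [Field K] (f : ZMod 3 →+* K)

theorem glToPGL2_mem_PSLsub_iff {u : GL (Fin 2) (ZMod 3)} :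
    glToPGL2 f u ∈ PSLsub f ↔ u.val.det = 1 := by
  constructor
  · rintro ⟨M, hM⟩
    obtain ⟨c, hc⟩ := (glToPGL2_eq_glToPGL2_iff f).mp hM.symm
    have hc0 : c ≠ 0 := by
      rintro rfl
      simpa [hc] using u.isUnit
    have hsq : ∀ c : ZMod 3, c ≠ 0 → c ^ 2 = 1 := by decide
    rw [hc, det_smul, Fintype.card_fin, SpecialLinearGroup.coe_GL_coe_matrix, M.det_coe, mul_one,
      hsq c hc0]
  · intro h
    exact ⟨⟨u.val, h⟩, congrArg (glToPGL2 f) (Units.ext rfl)⟩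

theorem eq_PSLsub_or_eq_PGLsub_of_le {H : Subgroup (PGL2 K)} (hA : PSLsub f ≤ H)
    (hS : H ≤ PGLsub f) : H = PSLsub f ∨ H = PGLsub f := by
  by_cases hHA : H ≤ PSLsub f
  · exact Or.inl (le_antisymm hHA hA)
  obtain ⟨_, hxH, hxA⟩ := SetLike.not_le_iff_exists.mp hHA
  obtain ⟨u, rfl⟩ := (mem_PGLsub_iff f).mp (hS hxH)
  rw [glToPGL2_mem_PSLsub_iff] at hxA
  refine Or.inr (le_antisymm hS ?_)
  intro x hx
  obtain ⟨v, rfl⟩ := (mem_PGLsub_iff f).mp hx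
  have hu0 : u.val.det ≠ 0 := (isUnits_det_units u).ne_zero
  have hdet : ∀ d e : ZMod 3, d ≠ 0 → d ≠ 1 → e ≠ 0 → e = 1 ∨ e = d := by decide
  rcases hdet _ _ hu0 hxA (isUnits_det_units v).ne_zero with hv | hv
  · exact hA ((glToPGL2_mem_PSLsub_iff f).mpr hv)
  · have huv : glToPGL2 f (u⁻¹ * v) ∈ H := by
      refine hA ((glToPGL2_mem_PSLsub_iff f).mpr ?_)
      rw [Units.val_mul, det_mul, coe_units_inv, det_nonsing_inv, Ring.inverse_eq_inv', hv,
        inv_mul_cancel₀ hu0]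
    simpa using mul_mem hxH huv

/-- `quatI`, `quatJ` and `quatI * quatJ` are the quaternion units `i`, `j`, `k` in `SL₂(𝔽₃)`. -/
def quatI : GL (Fin 2) (ZMod 3) := ⟨!![0, 1; -1, 0], !![0, -1; 1, 0], by decide, by decide⟩

def quatJ : GL (Fin 2) (ZMod 3) := ⟨!![1, 1; 1, -1], !![-1, -1; -1, 1], by decide, by decide⟩

def kleinFour : Set (PGL2 K) :=
  {1, glToPGL2 f quatI, glToPGL2 f quatJ, glToPGL2 f (quatI * quatJ)}

theorem kleinFour_subset_PSLsub : kleinFour f ⊆ PSLsub f := by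
  rintro _ (rfl | rfl | rfl | rfl)
  · exact one_mem _
  all_goals exact (glToPGL2_mem_PSLsub_iff f).mpr (by decide)

theorem exists_eq_smul_quat_of_mul_self_eq_smul_one (M : Matrix (Fin 2) (Fin 2) (ZMod 3))
    (hM : M.det = 1) (hsq : ∃ c : ZMod 3, M * M = c • 1) :
    ∃ c : ZMod 3, M = c • 1 ∨ M = c • quatI.val ∨ M = c • quatJ.val ∨
      M = c • (quatI * quatJ).val := by
  revert M
  decide

theorem mem_kleinFour_of_mul_self_eq_one {a : PGL2 K} (ha : a ∈ PSLsub f) (h2 : a * a = 1) :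
    a ∈ kleinFour f := by
  obtain ⟨M, rfl⟩ := ha
  change glToPGL2 f _ * glToPGL2 f _ = 1 at h2
  rw [← map_mul] at h2
  obtain ⟨c, hc⟩ := exists_eq_smul_one_of_glToPGL2_eq_one f h2
  obtain ⟨c, hc | hc | hc | hc⟩ := exists_eq_smul_quat_of_mul_self_eq_smul_one M.val M.det_coe
    ⟨c, hc⟩
  · exact Or.inl ((glToPGL2_eq_glToPGL2_iff f (v := 1)).mpr ⟨c, hc⟩ |>.trans (map_one _))
  · exact Or.inr (Or.inl ((glToPGL2_eq_glToPGL2_iff f).mpr ⟨c, hc⟩))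
  · exact Or.inr (Or.inr (Or.inl ((glToPGL2_eq_glToPGL2_iff f).mpr ⟨c, hc⟩)))
  · exact Or.inr (Or.inr (Or.inr ((glToPGL2_eq_glToPGL2_iff f).mpr ⟨c, hc⟩)))

theorem val_map_quatI : (GeneralLinearGroup.map f quatI).val = !![0, 1; -1, 0] := by
  ext i j; fin_cases i <;> fin_cases j <;> simp [quatI]

theorem val_map_quatJ : (GeneralLinearGroup.map f quatJ).val = !![1, 1; 1, -1] := by
  ext i j; fin_cases i <;> fin_cases j <;> simp [quatJ]

theorem val_map_quatI_mul_quatJ :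
    (GeneralLinearGroup.map f (quatI * quatJ)).val = !![1, -1; -1, -1] := by
  rw [map_mul, Units.val_mul, val_map_quatI, val_map_quatJ]
  simp

theorem mem_kleinFour_of_conj_eq {y : PGL2 K}
    (hI : MulAut.conj y (glToPGL2 f quatI) = glToPGL2 f quatI)
    (hJ : MulAut.conj y (glToPGL2 f quatJ) = glToPGL2 f quatJ) : y ∈ kleinFour f := by
  have h3 : (3 : K) = 0 := by
    rw [← map_ofNat f 3, show (OfNat.ofNat 3 : ZMod 3) = 0 from rfl, map_zero]
  obtain ⟨Y, rfl⟩ : ∃ Y, toPGL2 K Y = y := QuotientGroup.mk'_surjective _ y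
  rw [MulAut.conj_apply, mul_inv_eq_iff_eq_mul] at hI hJ
  have hI' : toPGL2 K (Y * GeneralLinearGroup.map f quatI) =
      toPGL2 K (GeneralLinearGroup.map f quatI * Y) := by rw [map_mul, map_mul]; exact hI
  have hJ' : toPGL2 K (Y * GeneralLinearGroup.map f quatJ) =
      toPGL2 K (GeneralLinearGroup.map f quatJ * Y) := by rw [map_mul, map_mul]; exact hJ
  obtain ⟨ε, hε⟩ := toPGL2_eq_toPGL2_iff.mp hI'
  obtain ⟨δ, hδ⟩ := toPGL2_eq_toPGL2_iff.mp hJ'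
  simp only [Units.val_mul, val_map_quatI, val_map_quatJ] at hε hδ
  obtain ⟨c, hc | hc | hc | hc⟩ :=
    exists_eq_smul_of_mul_quat_eq_smul h3 (isUnits_det_units Y).ne_zero hε hδ
  · exact Or.inl (toPGL2_eq_toPGL2_iff.mpr ⟨c, hc⟩)
  · exact Or.inr (Or.inl (toPGL2_eq_toPGL2_iff.mpr ⟨c, by rw [val_map_quatI]; exact hc⟩))
  · exact Or.inr (Or.inr (Or.inl
      (toPGL2_eq_toPGL2_iff.mpr ⟨c, by rw [val_map_quatJ]; exact hc⟩)))
  · exact Or.inr (Or.inr (Or.inr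
      (toPGL2_eq_toPGL2_iff.mpr ⟨c, by rw [val_map_quatI_mul_quatJ]; exact hc⟩)))

theorem glToPGL2_quatI_ne_one : glToPGL2 f quatI ≠ 1 := by
  rw [Ne, ← map_one (glToPGL2 f), glToPGL2_eq_glToPGL2_iff]
  decide

theorem glToPGL2_quatJ_ne_one : glToPGL2 f quatJ ≠ 1 := by
  rw [Ne, ← map_one (glToPGL2 f), glToPGL2_eq_glToPGL2_iff]
  decide

theorem glToPGL2_quatI_ne_quatJ : glToPGL2 f quatI ≠ glToPGL2 f quatJ := by
  rw [Ne, glToPGL2_eq_glToPGL2_iff]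
  decide

theorem glToPGL2_quatI_mul_self : glToPGL2 f quatI * glToPGL2 f quatI = 1 := by
  rw [← map_mul, ← map_one (glToPGL2 f), glToPGL2_eq_glToPGL2_iff]
  decide

theorem glToPGL2_quatJ_mul_self : glToPGL2 f quatJ * glToPGL2 f quatJ = 1 := by
  rw [← map_mul, ← map_one (glToPGL2 f), glToPGL2_eq_glToPGL2_iff]
  decide

theorem exists_mem_PGLsub_conj_quat_eq {t₁ t₂ : PGL2 K} (h₁ : t₁ ∈ kleinFour f)
    (h₂ : t₂ ∈ kleinFour f) (h₁₀ : t₁ ≠ 1) (h₂₀ : t₂ ≠ 1) (h₁₂ : t₁ ≠ t₂) :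
    ∃ s ∈ PGLsub f, MulAut.conj s (glToPGL2 f quatI) = t₁ ∧
      MulAut.conj s (glToPGL2 f quatJ) = t₂ := by
  have conj_by (P : GL (Fin 2) (ZMod 3)) {T₁ T₂ : GL (Fin 2) (ZMod 3)}
      (hP₁ : ∃ c : ZMod 3, P.val * quatI.val = c • (T₁.val * P.val))
      (hP₂ : ∃ c : ZMod 3, P.val * quatJ.val = c • (T₂.val * P.val)) :
      ∃ s ∈ PGLsub f, MulAut.conj s (glToPGL2 f quatI) = glToPGL2 f T₁ ∧
        MulAut.conj s (glToPGL2 f quatJ) = glToPGL2 f T₂ :=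
    ⟨_, (mem_PGLsub_iff f).mpr ⟨P, rfl⟩, glToPGL2_conj_eq f hP₁, glToPGL2_conj_eq f hP₂⟩
  rcases h₁ with rfl | rfl | rfl | rfl <;> rcases h₂ with rfl | rfl | rfl | rfl <;>
    try contradiction
  · exact conj_by 1 (by decide) (by decide)
  · exact conj_by ⟨!![0, 1; 1, 0], !![0, 1; 1, 0], by decide, by decide⟩ (by decide) (by decide)
  · exact conj_by ⟨!![0, 1; 1, -1], !![1, 1; 1, 0], by decide, by decide⟩ (by decide) (by decide)
  · exact conj_by ⟨!![0, 1; -1, -1], !![-1, -1; 1, 0], by decide, by decide⟩ (by decide)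
      (by decide)
  · exact conj_by ⟨!![0, 1; -1, 1], !![1, -1; 1, 0], by decide, by decide⟩ (by decide) (by decide)
  · exact conj_by ⟨!![0, 1; 1, 1], !![-1, 1; 1, 0], by decide, by decide⟩ (by decide) (by decide)

theorem normalizer_PSLsub_le_PGLsub :
    Subgroup.normalizer (PSLsub f : Set (PGL2 K)) ≤ PGLsub f := by
  intro x hx
  set σ := MulAut.conj x
  have hσ : ∀ a ∈ PSLsub f, a * a = 1 → σ a ∈ kleinFour f := fun a ha h2 ↦
    mem_kleinFour_of_mul_self_eq_one f ((Subgroup.mem_normalizer_iff.mp hx a).mp ha)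
      (by rw [← map_mul, h2, map_one])
  obtain ⟨s, hs, hsI, hsJ⟩ := exists_mem_PGLsub_conj_quat_eq f
    (hσ _ (kleinFour_subset_PSLsub f (Or.inr (Or.inl rfl))) (glToPGL2_quatI_mul_self f))
    (hσ _ (kleinFour_subset_PSLsub f (Or.inr (Or.inr (Or.inl rfl)))) (glToPGL2_quatJ_mul_self f))
    ((map_ne_one_iff σ σ.injective).mpr (glToPGL2_quatI_ne_one f))
    ((map_ne_one_iff σ σ.injective).mpr (glToPGL2_quatJ_ne_one f))
    (σ.injective.ne (glToPGL2_quatI_ne_quatJ f))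
  have hfix : ∀ t, MulAut.conj s t = σ t → MulAut.conj (s⁻¹ * x) t = t := fun t ht ↦ by
    rw [map_mul, MulAut.mul_apply, ← ht, ← MulAut.mul_apply, ← map_mul, inv_mul_cancel, map_one,
      MulAut.one_apply]
  have hsx : s⁻¹ * x ∈ PSLsub f := kleinFour_subset_PSLsub f <|
    mem_kleinFour_of_conj_eq f (hfix _ hsI) (hfix _ hsJ)
  simpa using mul_mem hs (PSLsub_le_PGLsub f hsx)

end ZMod3

theorem conj_psl_or_pgl_three_of_normal_general
    (G : Subgroup (PGL2 (AlgebraicClosure (ZMod 3)))) (N : Subgroup ↥G) [N.Normal]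
    (hN : IsConjSubgroup (N.map G.subtype)
      (PSLsub (algebraMap (ZMod 3) (AlgebraicClosure (ZMod 3))))) :
    IsConjSubgroup G (PSLsub (algebraMap (ZMod 3) (AlgebraicClosure (ZMod 3)))) ∨
      IsConjSubgroup G (PGLsub (algebraMap (ZMod 3) (AlgebraicClosure (ZMod 3)))) := by
  obtain ⟨g, hg⟩ := hN
  have hle : PSLsub _ ≤ G.map (MulAut.conj g).toMonoidHom :=
    hg ▸ Subgroup.map_mono (Subgroup.map_subtype_le N)
  have hnorm := hg ▸ map_conj_le_normalizer_of_normal (N := N) g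
  exact (eq_PSLsub_or_eq_PGLsub_of_le _ hle (hnorm.trans (normalizer_PSLsub_le_PGLsub _))).imp
    (⟨g, ·⟩) (⟨g, ·⟩)

/-- If `G ≤ PGL₂(k)` (`k` an algebraic closure of `𝔽₃`) has a normal subgroup `N` with
`G/N` abelian, and `N` is conjugate to `PSL₂(𝔽₃)`, then `G` is conjugate to `PSL₂(𝔽₃)`
or to `PGL₂(𝔽₃)`. -/
theorem conj_psl_or_pgl_three_of_normal
    (G : Subgroup (PGL2 (AlgebraicClosure (ZMod 3)))) (N : Subgroup ↥G) [N.Normal]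
    (hab : ∀ x y : ↥G ⧸ N, x * y = y * x)
    (hN : IsConjSubgroup (N.map G.subtype)
      (PSLsub (algebraMap (ZMod 3) (AlgebraicClosure (ZMod 3))))) :
    IsConjSubgroup G (PSLsub (algebraMap (ZMod 3) (AlgebraicClosure (ZMod 3)))) ∨
      IsConjSubgroup G (PGLsub (algebraMap (ZMod 3) (AlgebraicClosure (ZMod 3)))) :=
  conj_psl_or_pgl_three_of_normal_general G N hN
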